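/- arXiv:1702.08156 — 2 statements merged into one kernel-verified Lean document; each statement's English description precedes it below -/
import Mathlib

section
/- Let m and n be distinct positive integers, let s be a nonempty finite sequence of positive integers, let k ≥ j > 0, and let t^(1), t^(2) be sequences in {m, n}^k. Then t^(1) and t^(2) agree in their first j terms if and only if C_{m,n}(s, t^(1)) and C_{m,n}(s, t^(2)) agree in their first j terms. -/
/-- `expand1 m n x s` : the expansion `E_{m,n}(s, x)` of the finite sequence `s` with the
single starting point `x ∈ {m, n}`: the unique sequence with values in `{m, n}`, first term
`x`, and run-lengths `s`. -/
def expand1 (m n : ℕ) : ℕ → List ℕ → List ℕ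
  | _, [] => []
  | x, a :: l => List.replicate a x ++ expand1 m n (m + n - x) l

/-- `expand m n s t` : the expansion `E_{m,n}(s, t)` of the finite sequence `s` with the
finite sequence of starting points `t` (values in `{m, n}`), defined by
`E_{m,n}(s, t₁ t') = E_{m,n}(E_{m,n}(s, t₁), t')`. -/
def expand (m n : ℕ) : List ℕ → List ℕ → List ℕ
  | s, [] => s
  | s, x :: t => expand m n (expand1 m n x s) t

/-- `torsion m n s t` : the torsion `C_{m,n}(s, t)`, the sequence of the same length as `t`
whose `k`-th term equals `m + n` minus the last term of `E_{m,n}(s, t⁽ᵏ⁾)`, where `t⁽ᵏ⁾`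
consists of the first `k` terms of `t`. -/
def torsion (m n : ℕ) (s t : List ℕ) : List ℕ :=
  (List.range t.length).map fun k => m + n - (expand m n s (t.take (k + 1))).getLastD 0

/-!
The `(i+1)`-st term of `C(s, t)` is `m + n` minus the last symbol of `E(w, tᵢ₊₁)` with
`w = E(s, t⁽ⁱ⁾)`, and that last symbol is `tᵢ₊₁` or `m + n - tᵢ₊₁` according to the parity of
the number of runs `|w|`; so, given the prefix, it determines `tᵢ₊₁`. Since `C(s, t)` truncated
to `j` terms is `C(s, t⁽ʲ⁾)`, the theorem reduces to the injectivity of `C(s, ·)` on `{m, n}^j`,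
which follows by peeling off first terms: `C(s, x t') = c :: C(E(s, x), t')`.
-/

section

variable {m n : ℕ}

theorem expand1_cons (x a : ℕ) (l : List ℕ) :
    expand1 m n x (a :: l) = List.replicate a x ++ expand1 m n (m + n - x) l := rfl

theorem mem_expand1 {x a : ℕ} (hx : x ≤ m + n) {s : List ℕ} (ha : a ∈ expand1 m n x s) :
    a = x ∨ a = m + n - x := by
  induction s generalizing x with
  | nil => simp [expand1] at ha
  | cons b l ih =>
    rcases List.mem_append.mp ha with ha | ha
    · exact .inl (List.eq_of_mem_replicate ha)
    · rcases ih (by omega) ha with h | h <;> omega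

theorem expand1_ne_nil {x : ℕ} {s : List ℕ} (hs : s ≠ []) (hsp : ∀ a ∈ s, 0 < a) :
    expand1 m n x s ≠ [] := by
  obtain ⟨a, l, rfl⟩ := List.exists_cons_of_ne_nil hs
  simp [expand1_cons, (hsp a List.mem_cons_self).ne']

theorem getLastD_expand1 {x : ℕ} (hx : x ≤ m + n) {s : List ℕ} (hs : s ≠ [])
    (hsp : ∀ a ∈ s, 0 < a) (d : ℕ) :
    (expand1 m n x s).getLastD d = if Even s.length then m + n - x else x := by
  induction s generalizing x with
  | nil => exact absurd rfl hs
  | cons a l ih =>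
    by_cases hl : l = []
    · subst hl
      have ha := hsp a List.mem_cons_self
      simp [expand1, List.getLastD_eq_getLast?, List.getLast?_replicate, ha.ne']
    · have hl_pos : ∀ b ∈ l, 0 < b := fun b hb => hsp b (List.mem_cons_of_mem a hb)
      rw [expand1_cons, List.getLastD_eq_getLast?, List.getLast?_append_of_ne_nil _
        (expand1_ne_nil hl hl_pos), ← List.getLastD_eq_getLast?, ih (by omega) hl hl_pos,
        List.length_cons]
      simp only [Nat.even_add_one]
      split_ifs <;> omega

theorem torsion_nil (s : List ℕ) : torsion m n s [] = [] := rfl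

theorem torsion_cons (s : List ℕ) (x : ℕ) (t : List ℕ) :
    torsion m n s (x :: t) =
      (m + n - (expand1 m n x s).getLastD 0) :: torsion m n (expand1 m n x s) t := by
  simp [torsion, List.range_succ_eq_map, expand]

theorem torsion_take (s t : List ℕ) (j : ℕ) :
    (torsion m n s t).take j = torsion m n s (t.take j) := by
  induction t generalizing s j with
  | nil => simp [torsion_nil]
  | cons x t ih => cases j <;> simp [torsion_cons, torsion_nil, ih]

theorem eq_of_torsion_eq (hm : 0 < m) (hn : 0 < n) {s t₁ t₂ : List ℕ} (hs : s ≠ [])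
    (hsp : ∀ a ∈ s, 0 < a) (hl : t₁.length = t₂.length)
    (ht₁ : ∀ a ∈ t₁, a = m ∨ a = n) (ht₂ : ∀ a ∈ t₂, a = m ∨ a = n)
    (h : torsion m n s t₁ = torsion m n s t₂) : t₁ = t₂ := by
  induction t₁ generalizing s t₂ with
  | nil => exact (List.length_eq_zero_iff.mp hl.symm).symm
  | cons x t₁ ih =>
    obtain ⟨y, t₂, rfl⟩ := List.exists_cons_of_ne_nil (List.ne_nil_of_length_eq_add_one hl.symm)
    have hx := ht₁ x List.mem_cons_self
    have hy := ht₂ y List.mem_cons_self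
    rw [torsion_cons, torsion_cons, List.cons.injEq] at h
    rw [getLastD_expand1 (by omega) hs hsp, getLastD_expand1 (by omega) hs hsp] at h
    have hxy : x = y := by split_ifs at h <;> omega
    subst hxy
    have hpos : ∀ a ∈ expand1 m n x s, 0 < a := fun a ha => by
      rcases mem_expand1 (by omega) ha with rfl | rfl <;> omega
    rw [ih (expand1_ne_nil hs hsp) hpos (by simpa using hl)
      (fun a ha => ht₁ a (List.mem_cons_of_mem x ha))
      (fun a ha => ht₂ a (List.mem_cons_of_mem x ha)) h.2]

end

theorem torsion_take_agree_iff_general (m n : ℕ) (hm : 0 < m) (hn : 0 < n)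
    (s : List ℕ) (hs : s ≠ []) (hsp : ∀ a ∈ s, 0 < a)
    (j k : ℕ)
    (t₁ t₂ : List ℕ) (ht₁l : t₁.length = k) (ht₂l : t₂.length = k)
    (ht₁v : ∀ a ∈ t₁, a = m ∨ a = n) (ht₂v : ∀ a ∈ t₂, a = m ∨ a = n) :
    t₁.take j = t₂.take j ↔ (torsion m n s t₁).take j = (torsion m n s t₂).take j := by
  rw [torsion_take, torsion_take]
  refine ⟨congrArg _, eq_of_torsion_eq hm hn hs hsp (by simp [ht₁l, ht₂l]) ?_ ?_⟩
  · exact fun a ha => ht₁v a (List.mem_of_mem_take ha)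
  · exact fun a ha => ht₂v a (List.mem_of_mem_take ha)

/-- For `k ≥ j > 0` and `t⁽¹⁾, t⁽²⁾ ∈ {m, n}^k`, the sequences `t⁽¹⁾, t⁽²⁾` agree in their
first `j` terms iff `C_{m,n}(s, t⁽¹⁾), C_{m,n}(s, t⁽²⁾)` agree in their first `j` terms. -/
theorem torsion_take_agree_iff (m n : ℕ) (hm : 0 < m) (hn : 0 < n) (hmn : m ≠ n)
    (s : List ℕ) (hs : s ≠ []) (hsp : ∀ a ∈ s, 0 < a)
    (j k : ℕ) (hj : 0 < j) (hjk : j ≤ k)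
    (t₁ t₂ : List ℕ) (ht₁l : t₁.length = k) (ht₂l : t₂.length = k)
    (ht₁v : ∀ a ∈ t₁, a = m ∨ a = n) (ht₂v : ∀ a ∈ t₂, a = m ∨ a = n) :
    t₁.take j = t₂.take j ↔ (torsion m n s t₁).take j = (torsion m n s t₂).take j :=
  torsion_take_agree_iff_general m n hm hn s hs hsp j k t₁ t₂ ht₁l ht₂l ht₁v ht₂v
end

section
/- Let j > 0, let v denote the two-term sequence (0, −1), and let t be either the sequence (−1) v^{j-1} or the sequence v^{j-1} (0), both of which have length 2j−1 and values in {−1, 0}. Then the orbit of t under the generalized torsion map t ↦ C_{-1,0}(−1, t) on {−1, 0}^{2j-1} has length exactly 2^j. -/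
/-- Prepend a term to a list of length `k`, giving a list of length `k + 1`. -/
def gtCons (a : ℤ) {k : ℕ} (y : {l : List ℤ // l.length = k}) :
    {l : List ℤ // l.length = k + 1} :=
  ⟨a :: y.1, by simp [y.2]⟩

/-- The tail of a list of length `k + 1`, as a list of length `k`. -/
def gtTail {k : ℕ} (t : {l : List ℤ // l.length = k + 1}) : {l : List ℤ // l.length = k} :=
  ⟨t.1.tail, by simp [t.2]⟩

/-- The generalized torsion map `C_{m,n}(x, −)` on sequences of length `k`, as a
permutation, defined by induction on `k`:  `C_{m,n}(x, t₁ t') = (m + n − t₁) ·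
(C_{m,n}(t₁, −))^x (t')`, where the `x`-th iterate (`x ∈ ℤ`, possibly negative) is the
`zpow` of the permutation `C_{m,n}(t₁, −)` of length-`(k-1)` sequences. -/
def gtPerm (m n : ℤ) : (k : ℕ) → ℤ → Equiv.Perm {l : List ℤ // l.length = k}
  | 0, _ => Equiv.refl _
  | k + 1, x =>
    { toFun := fun t =>
        gtCons (m + n - t.1.headD 0) ((gtPerm m n k (t.1.headD 0) ^ x) (gtTail t))
      invFun := fun u =>
        gtCons (m + n - u.1.headD 0) ((gtPerm m n k (m + n - u.1.headD 0) ^ (-x)) (gtTail u))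
      left_inv := by
        rintro ⟨l, hl⟩
        obtain ⟨a, l', rfl⟩ : ∃ a l', l = a :: l' := by
          cases l with
          | nil => simp at hl
          | cons a l' => exact ⟨a, l', rfl⟩
        simp only [gtCons, gtTail, List.headD_cons, List.tail_cons, sub_sub_cancel,
          Subtype.coe_eta, ← Equiv.Perm.mul_apply, ← zpow_add, neg_add_cancel, zpow_zero,
          Equiv.Perm.coe_one, id_eq]
      right_inv := by
        rintro ⟨l, hl⟩
        obtain ⟨a, l', rfl⟩ : ∃ a l', l = a :: l' := by
          cases l with
          | nil => simp at hl
          | cons a l' => exact ⟨a, l', rfl⟩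
        simp only [gtCons, gtTail, List.headD_cons, List.tail_cons, sub_sub_cancel,
          Subtype.coe_eta, ← Equiv.Perm.mul_apply, ← zpow_add, add_neg_cancel, zpow_zero,
          Equiv.Perm.coe_one, id_eq] }

/-- The generalized torsion `C_{m,n}(x, t)` for arbitrary integers `m ≠ n` and `x`. -/
def gtorsion (m n : ℤ) (x : ℤ) (t : List ℤ) : List ℤ :=
  (gtPerm m n t.length x ⟨t, rfl⟩).1

/-! Write `τ = C_{-1,0}(-1, −)` and `σ = C_{-1,0}(0, −)`; the latter only complements the first
term (`a ↦ -1 - a`), so it is an involution. Unfolding the recursion twice shows that `τ²` fixes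
the first two terms of a `{-1, 0}`-sequence and acts on the rest by `σ` if they are equal and by
`τ` if they are complementary. By induction `τ^(2^j)` is the identity on `{-1, 0}^(2j-1)`. Both
sequences of the theorem have the form `w c` with `w` a string of `j - 1` complementary pairs,
and `τ^(2^(j-1))` complements the last term `c` of such a sequence, so the minimal period is
exactly `2^j`. -/

theorem gtorsion_cons (m n x a : ℤ) (l : List ℤ) :
    gtorsion m n x (a :: l) = (m + n - a) :: ((gtPerm m n l.length a ^ x) ⟨l, rfl⟩).1 :=
  rfl

theorem gtorsion_zero_cons (m n a : ℤ) (l : List ℤ) :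
    gtorsion m n 0 (a :: l) = (m + n - a) :: l := by
  rw [gtorsion_cons, zpow_zero]
  rfl

theorem gtorsion_neg_one_cons_cons (m n a b : ℤ) (l : List ℤ) :
    gtorsion m n (-1) (a :: b :: l) =
      (m + n - a) :: (m + n - b) :: ((gtPerm m n l.length (m + n - b) ^ (-a)) ⟨l, rfl⟩).1 := by
  rw [gtorsion_cons, zpow_neg_one]
  rfl

theorem gtorsion_neg_one_singleton (m n a : ℤ) : gtorsion m n (-1) [a] = [m + n - a] := by
  rw [gtorsion_cons]
  rfl

theorem gtorsion_zero_involutive (m n : ℤ) : Function.Involutive (gtorsion m n 0) := by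
  rintro (_ | ⟨a, l⟩)
  · rfl
  · rw [gtorsion_zero_cons, gtorsion_zero_cons, sub_sub_cancel]

section

local notation "τ" => gtorsion (-1) 0 (-1)

local notation "σ" => gtorsion (-1) 0 0

theorem gtorsion_neg_one_zero_cons_cons (b : ℤ) (l : List ℤ) :
    τ (0 :: b :: l) = -1 :: (-1 - b) :: l := by
  rw [gtorsion_neg_one_cons_cons, neg_zero, zpow_zero]
  norm_num

theorem gtorsion_neg_one_neg_one_cons_cons (b : ℤ) (l : List ℤ) :
    τ (-1 :: b :: l) = 0 :: (-1 - b) :: gtorsion (-1) 0 (-1 - b) l := by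
  rw [gtorsion_neg_one_cons_cons, neg_neg, zpow_one]
  simp only [add_zero, sub_neg_eq_add, neg_add_cancel]
  rfl

theorem gtorsion_semiconj_cons_cons_self {a : ℤ} (ha : a = -1 ∨ a = 0) :
    Function.Semiconj (fun l => a :: a :: l) σ τ^[2] := by
  intro l
  rcases ha with rfl | rfl <;>
    simp [gtorsion_neg_one_zero_cons_cons, gtorsion_neg_one_neg_one_cons_cons]

theorem gtorsion_semiconj_cons_cons_compl {a : ℤ} (ha : a = -1 ∨ a = 0) :
    Function.Semiconj (fun l => a :: (-1 - a) :: l) τ τ^[2] := by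
  intro l
  rcases ha with rfl | rfl <;>
    simp [gtorsion_neg_one_zero_cons_cons, gtorsion_neg_one_neg_one_cons_cons]

theorem gtorsion_neg_one_iterate_two_mul_cons_cons_self {a : ℤ} (ha : a = -1 ∨ a = 0) (N : ℕ)
    (l : List ℤ) : τ^[2 * N] (a :: a :: l) = a :: a :: σ^[N] l := by
  rw [Function.iterate_mul]
  exact ((gtorsion_semiconj_cons_cons_self ha).iterate_right N l).symm

theorem gtorsion_neg_one_iterate_two_mul_cons_cons_compl {a : ℤ} (ha : a = -1 ∨ a = 0) (N : ℕ)
    (l : List ℤ) : τ^[2 * N] (a :: (-1 - a) :: l) = a :: (-1 - a) :: τ^[N] l := by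
  rw [Function.iterate_mul]
  exact ((gtorsion_semiconj_cons_cons_compl ha).iterate_right N l).symm

theorem isPeriodicPt_gtorsion_neg_one (j : ℕ) (l : List ℤ) (hl : l.length = 2 * j + 1)
    (hmem : ∀ x ∈ l, x = -1 ∨ x = 0) : Function.IsPeriodicPt τ (2 ^ (j + 1)) l := by
  induction j generalizing l with
  | zero =>
    obtain ⟨a, rfl⟩ := List.length_eq_one_iff.mp hl
    show τ (τ [a]) = [a]
    simp [gtorsion_neg_one_singleton]
  | succ j ih =>
    obtain ⟨a, b, l, rfl⟩ : ∃ a b l', l = a :: b :: l' := by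
      rcases l with _ | ⟨a, _ | ⟨b, l⟩⟩ <;> simp at hl ⊢
    have ha : a = -1 ∨ a = 0 := hmem a (by simp)
    have hb : b = a ∨ b = -1 - a := by
      rcases ha with rfl | rfl <;> rcases hmem b (by simp) with rfl | rfl <;> norm_num
    rw [Function.IsPeriodicPt, Function.IsFixedPt, pow_succ']
    rcases hb with rfl | rfl
    · rw [gtorsion_neg_one_iterate_two_mul_cons_cons_self ha,
        (gtorsion_zero_involutive _ _).iterate_even (Nat.even_pow.mpr ⟨even_two, by omega⟩), id]
    · rw [gtorsion_neg_one_iterate_two_mul_cons_cons_compl ha,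
        ih l (by simp at hl; omega) (fun x hx => hmem x (by simp [hx]))]

theorem gtorsion_neg_one_iterate_flatten_append (ps : List ℤ) (hps : ∀ a ∈ ps, a = -1 ∨ a = 0)
    (c : ℤ) : τ^[2 ^ ps.length] ((ps.map fun a => [a, -1 - a]).flatten ++ [c]) =
      (ps.map fun a => [a, -1 - a]).flatten ++ [-1 - c] := by
  induction ps with
  | nil => simp [gtorsion_neg_one_singleton]
  | cons a ps ih =>
    simp only [List.length_cons, pow_succ', List.map_cons, List.flatten_cons, List.cons_append,
      List.nil_append]
    rw [gtorsion_neg_one_iterate_two_mul_cons_cons_compl (hps a (by simp)),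
      ih (fun x hx => hps x (by simp [hx]))]

theorem minimalPeriod_gtorsion_neg_one_flatten_append (ps : List ℤ)
    (hps : ∀ a ∈ ps, a = -1 ∨ a = 0) {c : ℤ} (hc : c = -1 ∨ c = 0) :
    Function.minimalPeriod τ ((ps.map fun a => [a, -1 - a]).flatten ++ [c]) =
      2 ^ (ps.length + 1) := by
  refine Function.minimalPeriod_eq_prime_pow ?_ ?_
  · rw [Function.IsPeriodicPt, Function.IsFixedPt,
      gtorsion_neg_one_iterate_flatten_append ps hps]
    simp only [List.append_cancel_left_eq, List.cons.injEq, and_true]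
    omega
  · refine isPeriodicPt_gtorsion_neg_one ps.length _ (by simp [Function.comp_def, mul_comm]) ?_
    simp only [List.mem_append, List.mem_flatten, List.mem_map, List.mem_singleton]
    rintro x (⟨_, ⟨a, ha, rfl⟩, hx⟩ | rfl)
    · rcases hps a ha with rfl | rfl <;> simp at hx <;> omega
    · exact hc

end

theorem List.cons_flatten_replicate_pair {α : Type*} (a b : α) (i : ℕ) :
    a :: (replicate i [b, a]).flatten = (replicate i [a, b]).flatten ++ [a] := by
  induction i with
  | zero => rfl
  | succ i ih => simp [List.replicate_succ, ih]

/-- For `j > 0` and `v = (0, -1)`, the orbits of `(-1) v^{j-1}` and of `v^{j-1} (0)`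
under the generalized torsion map `t ↦ C_{-1,0}(-1, t)` on `{-1, 0}^{2j-1}` have length
exactly `2^j`. -/
theorem gtorsion_orbit_neg (j : ℕ) (hj : 0 < j) :
    Function.minimalPeriod (gtorsion (-1) 0 (-1))
      ((-1 : ℤ) :: (List.replicate (j - 1) [(0 : ℤ), -1]).flatten) = 2 ^ j ∧
    Function.minimalPeriod (gtorsion (-1) 0 (-1))
      ((List.replicate (j - 1) [(0 : ℤ), -1]).flatten ++ [(0 : ℤ)]) = 2 ^ j := by
  obtain ⟨i, rfl⟩ := Nat.exists_eq_add_one.mpr hj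
  have hperiod := fun a (ha : a = -1 ∨ a = 0) =>
    minimalPeriod_gtorsion_neg_one_flatten_append (List.replicate i a)
      (fun x hx => (List.eq_of_mem_replicate hx).symm ▸ ha) ha
  simp only [List.map_replicate, List.length_replicate] at hperiod
  rw [Nat.add_sub_cancel, List.cons_flatten_replicate_pair]
  exact ⟨by simpa using hperiod (-1) (by simp), by simpa using hperiod 0 (by simp)⟩
end
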